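/- arXiv:1612.00191 — 5 statements merged into one kernel-verified Lean document; each statement's English description precedes it below -/
import Mathlib

section
/- Let Z₂(ℝ) = {([w:x:y:z],[u:v]) ∈ ℙ³(ℝ)×ℙ¹(ℝ) : wz = x²+y², uz = vw}. The maps α₁([w:x:y:z],[u:v]) = ([z:−x:y:w],[v:u]) and α₂([w:x:y:z],[u:v]) = ([w:−x:y:z],[u:v]) are well-defined bijections of Z₂(ℝ) satisfying α₁² = α₂² = (α₁α₂)² = id, and α₁, α₂ and α₁α₂ are all different from the identity; consequently α₁ and α₂ generate a subgroup of the symmetric group of Z₂(ℝ) isomorphic to the Klein four-group ℤ/2ℤ × ℤ/2ℤ. -/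
/-- The set of real points of the del Pezzo surface
`X₂ = {([w:x:y:z],[u:v]) ∈ ℙ³ × ℙ¹ : wz = x² + y², uz = vw}`. -/
def Z2Real : Set (Projectivization ℝ (Fin 4 → ℝ) × Projectivization ℝ (Fin 2 → ℝ)) :=
  {P | ∃ (w x y z u v : ℝ) (h1 : (![w, x, y, z] : Fin 4 → ℝ) ≠ 0)
      (h2 : (![u, v] : Fin 2 → ℝ) ≠ 0),
      P.1 = Projectivization.mk ℝ ![w, x, y, z] h1 ∧
      P.2 = Projectivization.mk ℝ ![u, v] h2 ∧
      w * z = x ^ 2 + y ^ 2 ∧ u * z = v * w}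

/-!
Both maps are induced by linear involutions of `ℝ⁴ × ℝ²` that commute with each other and
preserve the two defining equations, so they restrict to commuting involutions of `Z₂(ℝ)`.
The real point `([1:2:0:4],[1:4])` is moved by `α₁`, `α₂` and `α₁α₂`, and two distinct
nontrivial commuting involutions `a, b` of any group generate `{1, a, b, ab} ≅ (ℤ/2ℤ)²`.
-/

open Function Set

section ZModProdHom

variable {G : Type*} [Group G] {a b : G} {m n : ℕ}

lemma pow_zmod_val_add [NeZero n] (ha : a ^ n = 1) (i j : ZMod n) :
    a ^ (i + j).val = a ^ i.val * a ^ j.val := by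
  rw [ZMod.val_add, ← pow_eq_pow_mod _ ha, pow_add]

lemma pow_zmod_val_one (ha : a ^ n = 1) : a ^ (1 : ZMod n).val = a := by
  rw [ZMod.val_one_eq_one_mod, ← pow_eq_pow_mod _ ha, pow_one]

def zmodProdHom [NeZero m] [NeZero n] (ha : a ^ m = 1) (hb : b ^ n = 1) (hab : Commute a b) :
    Multiplicative (ZMod m × ZMod n) →* G where
  toFun g := a ^ g.toAdd.1.val * b ^ g.toAdd.2.val
  map_one' := by simp
  map_mul' g h := by
    simp only [toAdd_mul, Prod.fst_add, Prod.snd_add, pow_zmod_val_add ha, pow_zmod_val_add hb]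
    exact (hab.pow_pow _ _).mul_mul_mul_comm _ _

lemma zmodProdHom_ofAdd [NeZero m] [NeZero n] (ha : a ^ m = 1) (hb : b ^ n = 1)
    (hab : Commute a b) (i : ZMod m) (j : ZMod n) :
    zmodProdHom ha hb hab (.ofAdd (i, j)) = a ^ i.val * b ^ j.val :=
  rfl

lemma range_zmodProdHom [NeZero m] [NeZero n] (ha : a ^ m = 1) (hb : b ^ n = 1)
    (hab : Commute a b) : (zmodProdHom ha hb hab).range = Subgroup.closure {a, b} := by
  apply le_antisymm
  · rintro _ ⟨g, rfl⟩
    exact mul_mem (pow_mem (Subgroup.subset_closure (by simp)) _)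
      (pow_mem (Subgroup.subset_closure (by simp)) _)
  · rw [Subgroup.closure_le, Set.insert_subset_iff, Set.singleton_subset_iff]
    exact ⟨⟨.ofAdd (1, 0), by simp [zmodProdHom_ofAdd, pow_zmod_val_one ha]⟩,
      ⟨.ofAdd (0, 1), by simp [zmodProdHom_ofAdd, pow_zmod_val_one hb]⟩⟩

lemma zmodProdHom_injective (ha : a ^ 2 = 1) (hb : b ^ 2 = 1) (hab : Commute a b)
    (ha₁ : a ≠ 1) (hb₁ : b ≠ 1) (hab₁ : a * b ≠ 1) :
    Injective (zmodProdHom ha hb hab) := by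
  rw [injective_iff_map_eq_one, Multiplicative.ofAdd.surjective.forall]
  rintro ⟨i, j⟩ hg
  rw [zmodProdHom_ofAdd] at hg
  have zmod_two : ∀ k : ZMod 2, k = 0 ∨ k = 1 := by decide
  rcases zmod_two i with rfl | rfl <;> rcases zmod_two j with rfl | rfl <;>
    simp_all [ZMod.val_one]

lemma nonempty_closure_pair_mulEquiv_kleinFour (ha : a ^ 2 = 1) (hb : b ^ 2 = 1)
    (hab : Commute a b) (ha₁ : a ≠ 1) (hb₁ : b ≠ 1) (hab₁ : a * b ≠ 1) :
    Nonempty (Subgroup.closure {a, b} ≃* Multiplicative (ZMod 2 × ZMod 2)) :=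
  ⟨(MulEquiv.subgroupCongr (range_zmodProdHom ha hb hab).symm).trans
    (MonoidHom.ofInjective (zmodProdHom_injective ha hb hab ha₁ hb₁ hab₁)).symm⟩

end ZModProdHom

namespace Function.Involutive

variable {α : Type*} {f g : α → α} {s : Set α}

def restrictPerm (hf : Involutive f) (hs : MapsTo f s s) : Equiv.Perm s :=
  toPerm (hs.restrict f s s) fun x => Subtype.ext (hf x)

lemma restrictPerm_sq (hf : Involutive f) (hs : MapsTo f s s) : hf.restrictPerm hs ^ 2 = 1 :=
  Equiv.ext fun x => Subtype.ext (hf x)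

lemma commute_restrictPerm (hf : Involutive f) (hs : MapsTo f s s) (hg : Involutive g)
    (ht : MapsTo g s s) (hfg : f ∘ g = g ∘ f) :
    Commute (hf.restrictPerm hs) (hg.restrictPerm ht) :=
  Equiv.ext fun x => Subtype.ext (congrFun hfg x)

end Function.Involutive

namespace Projectivization

variable {K V : Type*} [DivisionRing K] [AddCommGroup V] [Module K V]

lemma map_involutive {f : V →ₗ[K] V} (hf : Involutive f) : Involutive (map f hf.injective) := by
  intro p
  induction p using ind with | h v hv => simp only [map_mk, hf v]

lemma map_comm {f g : V →ₗ[K] V} (hf : Injective f) (hg : Injective g) (hfg : Commute f g) :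
    map f hf ∘ map g hg = map g hg ∘ map f hf := by
  ext p : 1
  induction p using ind with
  | h v hv => simp only [comp_apply, map_mk, ← Module.End.mul_apply, hfg.eq]

lemma mk_ne_mk_of_mul_ne {ι F : Type*} [Field F] {v w : ι → F} (hv : v ≠ 0) (hw : w ≠ 0)
    {i j : ι} (h : v i * w j ≠ v j * w i) : mk F v hv ≠ mk F w hw := by
  rw [Ne, mk_eq_mk_iff']
  rintro ⟨a, rfl⟩
  exact h (by simp only [Pi.smul_apply, smul_eq_mul]; ring)

end Projectivization

open scoped LinearAlgebra.Projectivization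
open Projectivization

noncomputable section

namespace Z2Real

abbrev Ambient : Type := ℙ ℝ (Fin 4 → ℝ) × ℙ ℝ (Fin 2 → ℝ)

def negX : (Fin 4 → ℝ) →ₗ[ℝ] (Fin 4 → ℝ) :=
  LinearMap.pi ![.proj 0, -.proj 1, .proj 2, .proj 3]

def swapWZNegX : (Fin 4 → ℝ) →ₗ[ℝ] (Fin 4 → ℝ) :=
  LinearMap.pi ![.proj 3, -.proj 1, .proj 2, .proj 0]

def swapUV : (Fin 2 → ℝ) →ₗ[ℝ] (Fin 2 → ℝ) :=
  LinearMap.pi ![.proj 1, .proj 0]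

lemma negX_apply (w x y z : ℝ) : negX ![w, x, y, z] = ![w, -x, y, z] := by
  ext i; fin_cases i <;> rfl

lemma swapWZNegX_apply (w x y z : ℝ) : swapWZNegX ![w, x, y, z] = ![z, -x, y, w] := by
  ext i; fin_cases i <;> rfl

lemma swapUV_apply (u v : ℝ) : swapUV ![u, v] = ![v, u] := by
  ext i; fin_cases i <;> rfl

lemma negX_involutive : Involutive negX := by
  intro v; ext i; fin_cases i <;> simp [negX]

lemma swapWZNegX_involutive : Involutive swapWZNegX := by
  intro v; ext i; fin_cases i <;> simp [swapWZNegX]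

lemma swapUV_involutive : Involutive swapUV := by
  intro v; ext i; fin_cases i <;> simp [swapUV]

lemma commute_swapWZNegX_negX : Commute swapWZNegX negX := by
  ext v i; fin_cases i <;> simp [swapWZNegX, negX]

def ambientα₁ : Ambient → Ambient :=
  Prod.map (map swapWZNegX swapWZNegX_involutive.injective)
    (map swapUV swapUV_involutive.injective)

def ambientα₂ : Ambient → Ambient :=
  Prod.map (map negX negX_involutive.injective) id

lemma ambientα₁_involutive : Involutive ambientα₁ :=
  (map_involutive swapWZNegX_involutive).prodMap (map_involutive swapUV_involutive)

lemma ambientα₂_involutive : Involutive ambientα₂ :=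
  (map_involutive negX_involutive).prodMap fun _ => rfl

lemma ambientα₁_comp_ambientα₂ : ambientα₁ ∘ ambientα₂ = ambientα₂ ∘ ambientα₁ := by
  rw [ambientα₁, ambientα₂, Prod.map_comp_map, Prod.map_comp_map,
    map_comm _ _ commute_swapWZNegX_negX]
  rfl

lemma ambientα₁_mk {w x y z u v : ℝ} (h1 : ![w, x, y, z] ≠ 0) (h2 : ![u, v] ≠ 0)
    (h1' : ![z, -x, y, w] ≠ 0) (h2' : ![v, u] ≠ 0) :
    ambientα₁ (mk ℝ ![w, x, y, z] h1, mk ℝ ![u, v] h2) =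
      (mk ℝ ![z, -x, y, w] h1', mk ℝ ![v, u] h2') := by
  simp only [ambientα₁, Prod.map, map_mk, swapWZNegX_apply, swapUV_apply]

lemma ambientα₂_mk {w x y z u v : ℝ} (h1 : ![w, x, y, z] ≠ 0) (h2 : ![u, v] ≠ 0)
    (h1' : ![w, -x, y, z] ≠ 0) :
    ambientα₂ (mk ℝ ![w, x, y, z] h1, mk ℝ ![u, v] h2) =
      (mk ℝ ![w, -x, y, z] h1', mk ℝ ![u, v] h2) := by
  simp only [ambientα₂, Prod.map, map_mk, negX_apply, id]

lemma mapsTo_ambientα₁ : MapsTo ambientα₁ Z2Real Z2Real := by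
  rintro ⟨_, _⟩ ⟨w, x, y, z, u, v, h1, h2, rfl, rfl, hquad, hlin⟩
  have h1' : ![z, -x, y, w] ≠ 0 :=
    swapWZNegX_apply w x y z ▸ (map_ne_zero_iff _ swapWZNegX_involutive.injective).2 h1
  have h2' : ![v, u] ≠ 0 :=
    swapUV_apply u v ▸ (map_ne_zero_iff _ swapUV_involutive.injective).2 h2
  rw [ambientα₁_mk h1 h2 h1' h2']
  exact ⟨z, -x, y, w, v, u, h1', h2', rfl, rfl, by linear_combination hquad,
    by linear_combination -hlin⟩

lemma mapsTo_ambientα₂ : MapsTo ambientα₂ Z2Real Z2Real := by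
  rintro ⟨_, _⟩ ⟨w, x, y, z, u, v, h1, h2, rfl, rfl, hquad, hlin⟩
  have h1' : ![w, -x, y, z] ≠ 0 :=
    negX_apply w x y z ▸ (map_ne_zero_iff _ negX_involutive.injective).2 h1
  rw [ambientα₂_mk h1 h2 h1']
  exact ⟨w, -x, y, z, u, v, h1', h2, rfl, rfl, by linear_combination hquad, hlin⟩

def α₁ : Equiv.Perm Z2Real := ambientα₁_involutive.restrictPerm mapsTo_ambientα₁

def α₂ : Equiv.Perm Z2Real := ambientα₂_involutive.restrictPerm mapsTo_ambientα₂

lemma α₁_sq : α₁ ^ 2 = 1 := Involutive.restrictPerm_sq _ _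

lemma α₂_sq : α₂ ^ 2 = 1 := Involutive.restrictPerm_sq _ _

lemma commute_α₁_α₂ : Commute α₁ α₂ :=
  Involutive.commute_restrictPerm _ _ _ _ ambientα₁_comp_ambientα₂

def movedPoint : Ambient := (mk ℝ ![1, 2, 0, 4] (by simp), mk ℝ ![1, 4] (by simp))

lemma movedPoint_mem : movedPoint ∈ Z2Real :=
  ⟨1, 2, 0, 4, 1, 4, _, _, rfl, rfl, by norm_num, by norm_num⟩

lemma fst_ambientα₁_movedPoint_ne : (ambientα₁ movedPoint).1 ≠ movedPoint.1 := by
  rw [movedPoint, ambientα₁_mk _ _ (by simp) (by simp)]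
  exact mk_ne_mk_of_mul_ne _ _ (i := 0) (j := 3) (by norm_num [Matrix.cons_val_three])

lemma fst_ambientα₂_movedPoint_ne : (ambientα₂ movedPoint).1 ≠ movedPoint.1 := by
  rw [movedPoint, ambientα₂_mk _ _ (by simp)]
  exact mk_ne_mk_of_mul_ne _ _ (i := 0) (j := 1) (by norm_num)

lemma fst_ambientα₁_ambientα₂_movedPoint_ne :
    (ambientα₁ (ambientα₂ movedPoint)).1 ≠ movedPoint.1 := by
  rw [movedPoint, ambientα₂_mk _ _ (by simp), ambientα₁_mk _ _ (by simp) (by simp)]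
  exact mk_ne_mk_of_mul_ne _ _ (i := 0) (j := 3) (by norm_num [Matrix.cons_val_three])

lemma α₁_ne_one : α₁ ≠ 1 :=
  ne_of_apply_ne (fun σ : Equiv.Perm Z2Real => (σ ⟨_, movedPoint_mem⟩ : Ambient).1)
    fst_ambientα₁_movedPoint_ne

lemma α₂_ne_one : α₂ ≠ 1 :=
  ne_of_apply_ne (fun σ : Equiv.Perm Z2Real => (σ ⟨_, movedPoint_mem⟩ : Ambient).1)
    fst_ambientα₂_movedPoint_ne

lemma α₁_mul_α₂_ne_one : α₁ * α₂ ≠ 1 :=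
  ne_of_apply_ne (fun σ : Equiv.Perm Z2Real => (σ ⟨_, movedPoint_mem⟩ : Ambient).1)
    fst_ambientα₁_ambientα₂_movedPoint_ne

end Z2Real

end

open Z2Real in
/-- The maps `α₁([w:x:y:z],[u:v]) = ([z:−x:y:w],[v:u])` and
`α₂([w:x:y:z],[u:v]) = ([w:−x:y:z],[u:v])` are well-defined bijections of `Z₂(ℝ)` satisfying
`α₁² = α₂² = (α₁α₂)² = id`, all three of `α₁, α₂, α₁α₂` being nontrivial, and hence they
generate a subgroup of the symmetric group of `Z₂(ℝ)` isomorphic to the Klein four-group. -/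
theorem stmt_3 :
    ∃ α₁ α₂ : Equiv.Perm Z2Real,
      (∀ (w x y z u v : ℝ) (h1 : (![w, x, y, z] : Fin 4 → ℝ) ≠ 0)
          (h2 : (![u, v] : Fin 2 → ℝ) ≠ 0)
          (h1' : (![z, -x, y, w] : Fin 4 → ℝ) ≠ 0)
          (h2' : (![v, u] : Fin 2 → ℝ) ≠ 0)
          (hmem : (Projectivization.mk ℝ ![w, x, y, z] h1,
              Projectivization.mk ℝ ![u, v] h2) ∈ Z2Real),
        (α₁ ⟨_, hmem⟩).val =
          (Projectivization.mk ℝ ![z, -x, y, w] h1',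
            Projectivization.mk ℝ ![v, u] h2')) ∧
      (∀ (w x y z u v : ℝ) (h1 : (![w, x, y, z] : Fin 4 → ℝ) ≠ 0)
          (h2 : (![u, v] : Fin 2 → ℝ) ≠ 0)
          (h1' : (![w, -x, y, z] : Fin 4 → ℝ) ≠ 0)
          (hmem : (Projectivization.mk ℝ ![w, x, y, z] h1,
              Projectivization.mk ℝ ![u, v] h2) ∈ Z2Real),
        (α₂ ⟨_, hmem⟩).val =
          (Projectivization.mk ℝ ![w, -x, y, z] h1',
            Projectivization.mk ℝ ![u, v] h2)) ∧
      α₁ ^ 2 = 1 ∧ α₂ ^ 2 = 1 ∧ (α₁ * α₂) ^ 2 = 1 ∧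
      α₁ ≠ 1 ∧ α₂ ≠ 1 ∧ α₁ * α₂ ≠ 1 ∧
      Nonempty ((Subgroup.closure {α₁, α₂} : Subgroup (Equiv.Perm Z2Real)) ≃*
        Multiplicative (ZMod 2 × ZMod 2)) := by
  refine ⟨α₁, α₂, fun _ _ _ _ _ _ h1 h2 h1' h2' _ => ambientα₁_mk h1 h2 h1' h2',
    fun _ _ _ _ _ _ h1 h2 h1' _ => ambientα₂_mk h1 h2 h1', α₁_sq, α₂_sq, ?_,
    α₁_ne_one, α₂_ne_one, α₁_mul_α₂_ne_one,
    nonempty_closure_pair_mulEquiv_kleinFour α₁_sq α₂_sq commute_α₁_α₂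
      α₁_ne_one α₂_ne_one α₁_mul_α₂_ne_one⟩
  rw [commute_α₁_α₂.mul_pow, α₁_sq, α₂_sq, one_mul]
end

section
/- Let U = {([x₀:x₁:x₂],[y₀:y₁:y₂]) ∈ ℙ²(ℝ)×ℙ²(ℝ) : x₀y₀ = x₁y₂ + x₂y₁ and x₁y₁ = x₂y₂}. The maps α₁(x,y) = (y,x) and α₂(x,y) = ([x₀:x₂:x₁],[y₀:y₂:y₁]) are well-defined bijections of U satisfying α₁² = α₂² = (α₁α₂)² = id, with α₁, α₂ and α₁α₂ all different from the identity; consequently they generate a subgroup of the symmetric group of U isomorphic to the Klein four-group ℤ/2ℤ × ℤ/2ℤ. -/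
/-- The real del Pezzo surface of degree 6 obtained by blowing up two real points of the
sphere: `U = {([x₀:x₁:x₂],[y₀:y₁:y₂]) ∈ ℙ² × ℙ² : x₀y₀ = x₁y₂ + x₂y₁, x₁y₁ = x₂y₂}`. -/
def U6 : Set (Projectivization ℝ (Fin 3 → ℝ) × Projectivization ℝ (Fin 3 → ℝ)) :=
  {P | ∃ (x₀ x₁ x₂ y₀ y₁ y₂ : ℝ) (hx : (![x₀, x₁, x₂] : Fin 3 → ℝ) ≠ 0)
      (hy : (![y₀, y₁, y₂] : Fin 3 → ℝ) ≠ 0),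
      P.1 = Projectivization.mk ℝ ![x₀, x₁, x₂] hx ∧
      P.2 = Projectivization.mk ℝ ![y₀, y₁, y₂] hy ∧
      x₀ * y₀ = x₁ * y₂ + x₂ * y₁ ∧ x₁ * y₁ = x₂ * y₂}

/-!
`α₁` swaps the two factors and `α₂` is induced by the linear involution of `ℝ³` exchanging the
last two coordinates; both visibly preserve the two defining equations of `U`. They are commuting
involutions, so `(i, j) ↦ α₁ ^ i * α₂ ^ j` is a homomorphism from `ℤ/2 × ℤ/2` onto the subgroup
they generate, and it is injective because the single point `([1:2:0], [2:0:1])` of `U` is moved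
by each of `α₁`, `α₂`, `α₁α₂`.
-/

open scoped LinearAlgebra.Projectivization

section KleinFour

variable {G : Type*} [Group G] {a b : G}

theorem pow_mod_two_of_sq_eq_one (ha : a ^ 2 = 1) (n : ℕ) : a ^ (n % 2) = a ^ n := by
  conv_rhs => rw [← Nat.div_add_mod n 2, pow_add, pow_mul, ha, one_pow, one_mul]

theorem pow_zmod_two_val_add (ha : a ^ 2 = 1) (i j : ZMod 2) :
    a ^ (i + j).val = a ^ i.val * a ^ j.val := by
  rw [ZMod.val_add, pow_mod_two_of_sq_eq_one ha, pow_add]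

def kleinFourHom (ha : a ^ 2 = 1) (hb : b ^ 2 = 1) (hab : Commute a b) :
    Multiplicative (ZMod 2 × ZMod 2) →* G where
  toFun x := a ^ x.toAdd.1.val * b ^ x.toAdd.2.val
  map_one' := by simp
  map_mul' x y := by
    simp only [toAdd_mul, Prod.fst_add, Prod.snd_add, pow_zmod_two_val_add ha,
      pow_zmod_two_val_add hb]
    exact (hab.pow_pow _ _).mul_mul_mul_comm _ _

theorem Subgroup.closure_pair_nonempty_mulEquiv_kleinFour (ha : a ^ 2 = 1) (hb : b ^ 2 = 1)
    (hab : (a * b) ^ 2 = 1) (ha₁ : a ≠ 1) (hb₁ : b ≠ 1) (hab₁ : a * b ≠ 1) :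
    Nonempty (closure {a, b} ≃* Multiplicative (ZMod 2 × ZMod 2)) := by
  have inv_eq_self {g : G} (hg : g ^ 2 = 1) : g⁻¹ = g := by
    rwa [sq, mul_eq_one_iff_eq_inv, eq_comm] at hg
  have hcomm : Commute a b :=
    calc a * b = (a * b)⁻¹ := (inv_eq_self hab).symm
      _ = b * a := by rw [mul_inv_rev, inv_eq_self ha, inv_eq_self hb]
  set φ := kleinFourHom ha hb hcomm
  have hinj : Function.Injective φ := by
    rw [injective_iff_map_eq_one]
    intro x
    obtain ⟨⟨i, j⟩, rfl⟩ := Multiplicative.ofAdd.surjective x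
    have hcases : ∀ c : ZMod 2, c = 0 ∨ c = 1 := by decide
    rcases hcases i with rfl | rfl <;> rcases hcases j with rfl | rfl <;>
      simp [φ, kleinFourHom, ZMod.val_one_eq_one_mod, ha₁, hb₁, hab₁]
  have hrange : φ.range = closure {a, b} := by
    refine le_antisymm ?_ ((closure_le _).2 ?_)
    · rintro _ ⟨x, rfl⟩
      exact mul_mem (pow_mem (subset_closure (by simp)) _) (pow_mem (subset_closure (by simp)) _)
    · rintro g (rfl | rfl)
      · exact ⟨.ofAdd (1, 0), by simp [φ, kleinFourHom, ZMod.val_one_eq_one_mod]⟩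
      · exact ⟨.ofAdd (0, 1), by simp [φ, kleinFourHom, ZMod.val_one_eq_one_mod]⟩
  exact ⟨(MulEquiv.subgroupCongr hrange.symm).trans (MonoidHom.ofInjective hinj).symm⟩

end KleinFour

namespace Projectivization

variable {K ι : Type*} [Field K]

theorem mk_ne_mk_of_mul_ne_mul {v w : ι → K} (hv : v ≠ 0) (hw : w ≠ 0) (i j : ι)
    (h : v i * w j ≠ v j * w i) : mk K v hv ≠ mk K w hw := by
  rw [Ne, mk_eq_mk_iff']
  rintro ⟨c, rfl⟩
  exact h (by simp only [Pi.smul_apply, smul_eq_mul]; ring)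

end Projectivization

section CoordSwap

variable (K : Type*) [Semiring K]

def coordSwap12 : (Fin 3 → K) ≃ₗ[K] (Fin 3 → K) :=
  LinearEquiv.funCongrLeft K K (Equiv.swap 1 2)

variable {K}

theorem coordSwap12_apply (a b c : K) : coordSwap12 K ![a, b, c] = ![a, c, b] := by
  ext i
  fin_cases i <;> rfl

theorem coordSwap12_mul_self : coordSwap12 K * coordSwap12 K = 1 := by
  ext v i
  fin_cases i <;> rfl

theorem coordSwap12_smul_smul {X : Type*} [MulAction ((Fin 3 → K) ≃ₗ[K] (Fin 3 → K)) X] (x : X) :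
    coordSwap12 K • coordSwap12 K • x = x := by
  rw [smul_smul, coordSwap12_mul_self, one_smul]

end CoordSwap

section CoordSwapProjective

open Projectivization

variable {K : Type*} [Field K]

theorem coordSwap12_smul_mk (a b c : K) (h : ![a, b, c] ≠ 0) (h' : ![a, c, b] ≠ 0) :
    coordSwap12 K • mk K ![a, b, c] h = mk K ![a, c, b] h' := by
  simp only [smul_mk, LinearEquiv.smul_def, coordSwap12_apply]

end CoordSwapProjective

namespace U6

open Projectivization Equiv

local notation "ℙ²" => ℙ ℝ (Fin 3 → ℝ)

theorem mk_mem {x₀ x₁ x₂ y₀ y₁ y₂ : ℝ} (hx : ![x₀, x₁, x₂] ≠ 0) (hy : ![y₀, y₁, y₂] ≠ 0)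
    (h₀ : x₀ * y₀ = x₁ * y₂ + x₂ * y₁) (h₁ : x₁ * y₁ = x₂ * y₂) :
    (mk ℝ ![x₀, x₁, x₂] hx, mk ℝ ![y₀, y₁, y₂] hy) ∈ U6 :=
  ⟨x₀, x₁, x₂, y₀, y₁, y₂, hx, hy, rfl, rfl, h₀, h₁⟩

theorem swap_mem {P : ℙ² × ℙ²} (hP : P ∈ U6) : P.swap ∈ U6 := by
  obtain ⟨p, q⟩ := P
  obtain ⟨x₀, x₁, x₂, y₀, y₁, y₂, hx, hy, rfl, rfl, h₀, h₁⟩ := hP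
  exact mk_mem hy hx (by linarith) (by linarith)

theorem smul_mem {P : ℙ² × ℙ²} (hP : P ∈ U6) : coordSwap12 ℝ • P ∈ U6 := by
  obtain ⟨p, q⟩ := P
  obtain ⟨x₀, x₁, x₂, y₀, y₁, y₂, hx, hy, rfl, rfl, h₀, h₁⟩ := hP
  have hx' : ![x₀, x₂, x₁] ≠ 0 := coordSwap12_apply x₀ x₁ x₂ ▸ (coordSwap12 ℝ).map_ne_zero_iff.2 hx
  have hy' : ![y₀, y₂, y₁] ≠ 0 := coordSwap12_apply y₀ y₁ y₂ ▸ (coordSwap12 ℝ).map_ne_zero_iff.2 hy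
  rw [Prod.smul_mk, coordSwap12_smul_mk _ _ _ hx hx', coordSwap12_smul_mk _ _ _ hy hy']
  exact mk_mem hx' hy' (by linarith) (by linarith)

noncomputable def swapFactors : Perm U6 :=
  Perm.subtypePerm (prodComm ℙ² ℙ²) fun _ => ⟨fun h => swap_mem h, swap_mem⟩

noncomputable def swapCoords : Perm U6 :=
  Perm.subtypePerm (MulAction.toPerm (coordSwap12 ℝ) : Perm (ℙ² × ℙ²)) fun P =>
    ⟨fun h => coordSwap12_smul_smul (K := ℝ) P ▸ smul_mem h, smul_mem⟩

theorem swapFactors_sq : swapFactors ^ 2 = 1 :=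
  Equiv.ext fun _ => rfl

theorem swapCoords_sq : swapCoords ^ 2 = 1 :=
  Equiv.ext fun P => Subtype.ext (coordSwap12_smul_smul (K := ℝ) P.1)

theorem commute_swapFactors_swapCoords : Commute swapFactors swapCoords :=
  Equiv.ext fun _ => rfl

theorem swapFactors_mul_swapCoords_sq : (swapFactors * swapCoords) ^ 2 = 1 := by
  rw [commute_swapFactors_swapCoords.mul_pow, swapFactors_sq, swapCoords_sq, one_mul]

theorem exists_moved_by_swaps :
    ∃ P : U6, swapFactors P ≠ P ∧ swapCoords P ≠ P ∧ (swapFactors * swapCoords) P ≠ P := by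
  have h120 : ![(1 : ℝ), 2, 0] ≠ 0 := by simp
  have h201 : ![(2 : ℝ), 0, 1] ≠ 0 := by simp
  have h102 : ![(1 : ℝ), 0, 2] ≠ 0 := by simp
  have h210 : ![(2 : ℝ), 1, 0] ≠ 0 := by simp
  refine ⟨⟨_, mk_mem h120 h201 (by norm_num) (by norm_num)⟩, ?_, ?_, ?_⟩ <;>
    refine ne_of_apply_ne (fun P : U6 => P.1.1) ?_
  · exact mk_ne_mk_of_mul_ne_mul h201 h120 0 1 (by norm_num)
  · change coordSwap12 ℝ • mk ℝ ![1, 2, 0] h120 ≠ _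
    rw [coordSwap12_smul_mk _ _ _ h120 h102]
    exact mk_ne_mk_of_mul_ne_mul h102 h120 0 1 (by norm_num)
  · change coordSwap12 ℝ • mk ℝ ![2, 0, 1] h201 ≠ _
    rw [coordSwap12_smul_mk _ _ _ h201 h210]
    exact mk_ne_mk_of_mul_ne_mul h210 h120 0 1 (by norm_num)

end U6

/-- The maps `α₁(x,y) = (y,x)` and `α₂(x,y) = ([x₀:x₂:x₁],[y₀:y₂:y₁])` are well-defined
bijections of `U` satisfying `α₁² = α₂² = (α₁α₂)² = id`, with `α₁`, `α₂` and `α₁α₂` all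
different from the identity; consequently they generate a subgroup of the symmetric group of
`U` isomorphic to the Klein four-group `ℤ/2ℤ × ℤ/2ℤ`. -/
theorem stmt_6 :
    ∃ α₁ α₂ : Equiv.Perm U6,
      (∀ (x₀ x₁ x₂ y₀ y₁ y₂ : ℝ) (hx : (![x₀, x₁, x₂] : Fin 3 → ℝ) ≠ 0)
          (hy : (![y₀, y₁, y₂] : Fin 3 → ℝ) ≠ 0)
          (hmem : (Projectivization.mk ℝ ![x₀, x₁, x₂] hx,
              Projectivization.mk ℝ ![y₀, y₁, y₂] hy) ∈ U6),
        (α₁ ⟨_, hmem⟩).val =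
          (Projectivization.mk ℝ ![y₀, y₁, y₂] hy,
            Projectivization.mk ℝ ![x₀, x₁, x₂] hx)) ∧
      (∀ (x₀ x₁ x₂ y₀ y₁ y₂ : ℝ) (hx : (![x₀, x₁, x₂] : Fin 3 → ℝ) ≠ 0)
          (hy : (![y₀, y₁, y₂] : Fin 3 → ℝ) ≠ 0)
          (hx' : (![x₀, x₂, x₁] : Fin 3 → ℝ) ≠ 0)
          (hy' : (![y₀, y₂, y₁] : Fin 3 → ℝ) ≠ 0)
          (hmem : (Projectivization.mk ℝ ![x₀, x₁, x₂] hx,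
              Projectivization.mk ℝ ![y₀, y₁, y₂] hy) ∈ U6),
        (α₂ ⟨_, hmem⟩).val =
          (Projectivization.mk ℝ ![x₀, x₂, x₁] hx',
            Projectivization.mk ℝ ![y₀, y₂, y₁] hy')) ∧
      α₁ ^ 2 = 1 ∧ α₂ ^ 2 = 1 ∧ (α₁ * α₂) ^ 2 = 1 ∧
      α₁ ≠ 1 ∧ α₂ ≠ 1 ∧ α₁ * α₂ ≠ 1 ∧
      Nonempty ((Subgroup.closure {α₁, α₂} : Subgroup (Equiv.Perm U6)) ≃*
        Multiplicative (ZMod 2 × ZMod 2)) := by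
  obtain ⟨P, hP₁, hP₂, hP₁₂⟩ := U6.exists_moved_by_swaps
  have h₁ : U6.swapFactors ≠ 1 := ne_of_apply_ne (· P) hP₁
  have h₂ : U6.swapCoords ≠ 1 := ne_of_apply_ne (· P) hP₂
  have h₁₂ : U6.swapFactors * U6.swapCoords ≠ 1 := ne_of_apply_ne (· P) hP₁₂
  refine ⟨U6.swapFactors, U6.swapCoords, fun _ _ _ _ _ _ _ _ _ => rfl, ?_, U6.swapFactors_sq,
    U6.swapCoords_sq, U6.swapFactors_mul_swapCoords_sq, h₁, h₂, h₁₂,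
    Subgroup.closure_pair_nonempty_mulEquiv_kleinFour U6.swapFactors_sq U6.swapCoords_sq
      U6.swapFactors_mul_swapCoords_sq h₁ h₂ h₁₂⟩
  intro x₀ x₁ x₂ y₀ y₁ y₂ hx hy hx' hy' _
  exact Prod.ext (coordSwap12_smul_mk _ _ _ hx hx') (coordSwap12_smul_mk _ _ _ hy hy')
end

section
/- Let P ∈ ℂ[u₀,u₁] be a nonzero homogeneous polynomial and let P̄ be the polynomial obtained by complex-conjugating its coefficients. Define partial self-maps of ℙ¹(ℂ)×ℙ¹(ℂ) by φ([u₀:u₁],[v₀:v₁]) = ([u₀:u₁], [u₁v₁·P̄(u₀,u₁) : u₀v₀·P(u₀,u₁)]) and σ_C([u₀:u₁],[v₀:v₁]) = ([conj u₀ : conj u₁], [conj(u₁v₁) : conj(u₀v₀)]), each defined at the points where the indicated image coordinate pair is nonzero. Then: (i) φ(φ(q)) = q for every q at which both applications are defined; (ii) σ_C(σ_C(q)) = q for every q at which both applications are defined; (iii) φ(σ_C(q)) = σ_C(φ(q)) for every q at which both sides are defined. -/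
/-!
On representatives, `φ ∘ φ` and `σ_C ∘ σ_C` rescale `(v₀, v₁)` by `u₀u₁·P(u)·P̄(u)` and by
`u₀u₁` respectively, so they fix the point of `ℙ¹ × ℙ¹`. Since `P̄(conj u) = conj (P(u))`,
the two vectors computing `φ ∘ σ_C` and `σ_C ∘ φ` are even equal.
-/

open ComplexConjugate

/-- Evaluation of a polynomial `P ∈ ℂ[u₀,u₁]` at `(a,b)`. -/
noncomputable def evalP (P : MvPolynomial (Fin 2) ℂ) (a b : ℂ) : ℂ :=
  MvPolynomial.eval ![a, b] P

/-- Evaluation at `(a,b)` of the polynomial `P̄` obtained by conjugating the coefficients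
of `P`. -/
noncomputable def evalPbar (P : MvPolynomial (Fin 2) ℂ) (a b : ℂ) : ℂ :=
  MvPolynomial.eval ![a, b] (MvPolynomial.map (starRingEnd ℂ) P)

open MvPolynomial

theorem MvPolynomial.eval_map_conj {σ : Type*} (x : σ → ℂ) (p : MvPolynomial σ ℂ) :
    eval (conj ∘ x) (map (starRingEnd ℂ) p) = conj (eval x p) := by
  rw [eval_map]
  exact (eval₂_comp_left (starRingEnd ℂ) (RingHom.id ℂ) x p).symm

theorem evalPbar_conj (P : MvPolynomial (Fin 2) ℂ) (a b : ℂ) :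
    evalPbar P (conj a) (conj b) = conj (evalP P a b) := by
  rw [evalP, ← eval_map_conj, evalPbar]
  congr 2
  funext i; fin_cases i <;> rfl

theorem evalP_conj (P : MvPolynomial (Fin 2) ℂ) (a b : ℂ) :
    evalP P (conj a) (conj b) = conj (evalPbar P a b) := by
  have hinv : map (starRingEnd ℂ) (map (starRingEnd ℂ) P) = P := by
    rw [map_map, show (starRingEnd ℂ).comp (starRingEnd ℂ) = RingHom.id ℂ by ext; simp, map_id]
  rw [evalPbar, ← eval_map_conj, hinv, evalP]
  congr 2
  funext i; fin_cases i <;> rfl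

theorem stmt_8_general (P : MvPolynomial (Fin 2) ℂ) :
    -- (i) φ(φ(q)) = q
    (∀ (u₀ u₁ v₀ v₁ : ℂ) (hu : (![u₀, u₁] : Fin 2 → ℂ) ≠ 0)
        (hv : (![v₀, v₁] : Fin 2 → ℂ) ≠ 0)
        (h1 : (![u₁ * v₁ * evalPbar P u₀ u₁, u₀ * v₀ * evalP P u₀ u₁] : Fin 2 → ℂ) ≠ 0)
        (h2 : (![u₁ * (u₀ * v₀ * evalP P u₀ u₁) * evalPbar P u₀ u₁,
            u₀ * (u₁ * v₁ * evalPbar P u₀ u₁) * evalP P u₀ u₁] : Fin 2 → ℂ) ≠ 0),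
      (Projectivization.mk ℂ ![u₀, u₁] hu,
        Projectivization.mk ℂ ![u₁ * (u₀ * v₀ * evalP P u₀ u₁) * evalPbar P u₀ u₁,
          u₀ * (u₁ * v₁ * evalPbar P u₀ u₁) * evalP P u₀ u₁] h2) =
      (Projectivization.mk ℂ ![u₀, u₁] hu, Projectivization.mk ℂ ![v₀, v₁] hv)) ∧
    -- (ii) σ_C(σ_C(q)) = q
    (∀ (u₀ u₁ v₀ v₁ : ℂ) (hu : (![u₀, u₁] : Fin 2 → ℂ) ≠ 0)
        (hv : (![v₀, v₁] : Fin 2 → ℂ) ≠ 0)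
        (hu' : (![conj u₀, conj u₁] : Fin 2 → ℂ) ≠ 0)
        (h1 : (![conj (u₁ * v₁), conj (u₀ * v₀)] : Fin 2 → ℂ) ≠ 0)
        (hu'' : (![conj (conj u₀), conj (conj u₁)] : Fin 2 → ℂ) ≠ 0)
        (h2 : (![conj (conj u₁ * conj (u₀ * v₀)), conj (conj u₀ * conj (u₁ * v₁))] :
          Fin 2 → ℂ) ≠ 0),
      (Projectivization.mk ℂ ![conj (conj u₀), conj (conj u₁)] hu'',
        Projectivization.mk ℂ
          ![conj (conj u₁ * conj (u₀ * v₀)), conj (conj u₀ * conj (u₁ * v₁))] h2) =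
      (Projectivization.mk ℂ ![u₀, u₁] hu, Projectivization.mk ℂ ![v₀, v₁] hv)) ∧
    -- (iii) φ(σ_C(q)) = σ_C(φ(q))
    (∀ (u₀ u₁ v₀ v₁ : ℂ) (hu : (![u₀, u₁] : Fin 2 → ℂ) ≠ 0)
        (hv : (![v₀, v₁] : Fin 2 → ℂ) ≠ 0)
        (hσ : (![conj (u₁ * v₁), conj (u₀ * v₀)] : Fin 2 → ℂ) ≠ 0)
        (hL : (![conj u₁ * conj (u₀ * v₀) * evalPbar P (conj u₀) (conj u₁),
            conj u₀ * conj (u₁ * v₁) * evalP P (conj u₀) (conj u₁)] : Fin 2 → ℂ) ≠ 0)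
        (hφ : (![u₁ * v₁ * evalPbar P u₀ u₁, u₀ * v₀ * evalP P u₀ u₁] : Fin 2 → ℂ) ≠ 0)
        (hR : (![conj (u₁ * (u₀ * v₀ * evalP P u₀ u₁)),
            conj (u₀ * (u₁ * v₁ * evalPbar P u₀ u₁))] : Fin 2 → ℂ) ≠ 0),
      Projectivization.mk ℂ ![conj u₁ * conj (u₀ * v₀) * evalPbar P (conj u₀) (conj u₁),
          conj u₀ * conj (u₁ * v₁) * evalP P (conj u₀) (conj u₁)] hL =
        Projectivization.mk ℂ ![conj (u₁ * (u₀ * v₀ * evalP P u₀ u₁)),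
          conj (u₀ * (u₁ * v₁ * evalPbar P u₀ u₁))] hR) := by
  refine ⟨?_, ?_, ?_⟩
  · intro u₀ u₁ v₀ v₁ hu hv _ h2
    refine Prod.ext rfl ((Projectivization.mk_eq_mk_iff' ℂ _ _ h2 hv).2
      ⟨u₀ * u₁ * evalP P u₀ u₁ * evalPbar P u₀ u₁, ?_⟩)
    ext i; fin_cases i <;> simp <;> ring
  · intro u₀ u₁ v₀ v₁ hu hv _ _ hu'' h2
    refine Prod.ext ?_ ((Projectivization.mk_eq_mk_iff' ℂ _ _ h2 hv).2 ⟨u₀ * u₁, ?_⟩)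
    · simp only [Complex.conj_conj]
    · ext i; fin_cases i <;> simp <;> ring
  · intro u₀ u₁ v₀ v₁ _ _ _ hL _ hR
    congr 1
    ext i; fin_cases i <;> simp [evalP_conj, evalPbar_conj] <;> ring

/-- For a nonzero homogeneous `P ∈ ℂ[u₀,u₁]`, the partial self-maps of `ℙ¹(ℂ) × ℙ¹(ℂ)`
`φ([u₀:u₁],[v₀:v₁]) = ([u₀:u₁], [u₁v₁·P̄(u₀,u₁) : u₀v₀·P(u₀,u₁)])` and
`σ_C([u₀:u₁],[v₀:v₁]) = ([conj u₀ : conj u₁], [conj(u₁v₁) : conj(u₀v₀)])` satisfy: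
(i) `φ ∘ φ = id`, (ii) `σ_C ∘ σ_C = id`, and (iii) `φ ∘ σ_C = σ_C ∘ φ`,
wherever the relevant applications are defined. -/
theorem stmt_8 (P : MvPolynomial (Fin 2) ℂ) (hP : P ≠ 0) (n : ℕ)
    (hhom : P.IsHomogeneous n) :
    -- (i) φ(φ(q)) = q
    (∀ (u₀ u₁ v₀ v₁ : ℂ) (hu : (![u₀, u₁] : Fin 2 → ℂ) ≠ 0)
        (hv : (![v₀, v₁] : Fin 2 → ℂ) ≠ 0)
        (h1 : (![u₁ * v₁ * evalPbar P u₀ u₁, u₀ * v₀ * evalP P u₀ u₁] : Fin 2 → ℂ) ≠ 0)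
        (h2 : (![u₁ * (u₀ * v₀ * evalP P u₀ u₁) * evalPbar P u₀ u₁,
            u₀ * (u₁ * v₁ * evalPbar P u₀ u₁) * evalP P u₀ u₁] : Fin 2 → ℂ) ≠ 0),
      (Projectivization.mk ℂ ![u₀, u₁] hu,
        Projectivization.mk ℂ ![u₁ * (u₀ * v₀ * evalP P u₀ u₁) * evalPbar P u₀ u₁,
          u₀ * (u₁ * v₁ * evalPbar P u₀ u₁) * evalP P u₀ u₁] h2) =
      (Projectivization.mk ℂ ![u₀, u₁] hu, Projectivization.mk ℂ ![v₀, v₁] hv)) ∧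
    -- (ii) σ_C(σ_C(q)) = q
    (∀ (u₀ u₁ v₀ v₁ : ℂ) (hu : (![u₀, u₁] : Fin 2 → ℂ) ≠ 0)
        (hv : (![v₀, v₁] : Fin 2 → ℂ) ≠ 0)
        (hu' : (![conj u₀, conj u₁] : Fin 2 → ℂ) ≠ 0)
        (h1 : (![conj (u₁ * v₁), conj (u₀ * v₀)] : Fin 2 → ℂ) ≠ 0)
        (hu'' : (![conj (conj u₀), conj (conj u₁)] : Fin 2 → ℂ) ≠ 0)
        (h2 : (![conj (conj u₁ * conj (u₀ * v₀)), conj (conj u₀ * conj (u₁ * v₁))] :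
          Fin 2 → ℂ) ≠ 0),
      (Projectivization.mk ℂ ![conj (conj u₀), conj (conj u₁)] hu'',
        Projectivization.mk ℂ
          ![conj (conj u₁ * conj (u₀ * v₀)), conj (conj u₀ * conj (u₁ * v₁))] h2) =
      (Projectivization.mk ℂ ![u₀, u₁] hu, Projectivization.mk ℂ ![v₀, v₁] hv)) ∧
    -- (iii) φ(σ_C(q)) = σ_C(φ(q))
    (∀ (u₀ u₁ v₀ v₁ : ℂ) (hu : (![u₀, u₁] : Fin 2 → ℂ) ≠ 0)
        (hv : (![v₀, v₁] : Fin 2 → ℂ) ≠ 0)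
        (hσ : (![conj (u₁ * v₁), conj (u₀ * v₀)] : Fin 2 → ℂ) ≠ 0)
        (hL : (![conj u₁ * conj (u₀ * v₀) * evalPbar P (conj u₀) (conj u₁),
            conj u₀ * conj (u₁ * v₁) * evalP P (conj u₀) (conj u₁)] : Fin 2 → ℂ) ≠ 0)
        (hφ : (![u₁ * v₁ * evalPbar P u₀ u₁, u₀ * v₀ * evalP P u₀ u₁] : Fin 2 → ℂ) ≠ 0)
        (hR : (![conj (u₁ * (u₀ * v₀ * evalP P u₀ u₁)),
            conj (u₀ * (u₁ * v₁ * evalPbar P u₀ u₁))] : Fin 2 → ℂ) ≠ 0),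
      Projectivization.mk ℂ ![conj u₁ * conj (u₀ * v₀) * evalPbar P (conj u₀) (conj u₁),
          conj u₀ * conj (u₁ * v₁) * evalP P (conj u₀) (conj u₁)] hL =
        Projectivization.mk ℂ ![conj (u₁ * (u₀ * v₀ * evalP P u₀ u₁)),
          conj (u₀ * (u₁ * v₁ * evalPbar P u₀ u₁))] hR) :=
  stmt_8_general P
end

section
/- Let Z = {([x₀:x₁:x₂],[y₀:y₁:y₂]) ∈ ℙ²(ℂ)×ℙ²(ℂ) : x₀y₀ = x₁y₁ = x₂y₂}. For a nonzero complex number a, define β_a(x,y) = ([a·conj(a)·x₀ : x₁ : conj(a)·x₂], [y₀ : a·conj(a)·y₁ : a·y₂]). Then β_a is a well-defined bijection of Z, and β_a fixes every point of the curve s = {(x,y) ∈ Z : x₀ = x₁ = 0} if and only if a·conj(a) = 1, i.e. |a| = 1. -/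
/-!
`β_a` is the action on `ℙ² × ℙ²` of the diagonal pair `dx = (|a|², 1, ā)`, `dy = (1, |a|², a)`,
and `Z` is preserved by every diagonal pair whose coordinatewise product `dx i * dy i` is
constant (here `|a|²`). The points of `s` are `([0:0:1], [y₀:y₁:0])`, and a diagonal matrix
fixes `[v]` iff it is constant on the support of `v`; so `β_a` fixes `s` iff `dy 0 = dy 1`,
i.e. `|a|² = 1`.
-/

/-- The complex del Pezzo surface of degree 6:
`Z = {([x₀:x₁:x₂],[y₀:y₁:y₂]) ∈ ℙ²(ℂ) × ℙ²(ℂ) : x₀y₀ = x₁y₁ = x₂y₂}`. -/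
def Z6C : Set (Projectivization ℂ (Fin 3 → ℂ) × Projectivization ℂ (Fin 3 → ℂ)) :=
  {P | ∃ (x₀ x₁ x₂ y₀ y₁ y₂ : ℂ) (hx : (![x₀, x₁, x₂] : Fin 3 → ℂ) ≠ 0)
      (hy : (![y₀, y₁, y₂] : Fin 3 → ℂ) ≠ 0),
      P.1 = Projectivization.mk ℂ ![x₀, x₁, x₂] hx ∧
      P.2 = Projectivization.mk ℂ ![y₀, y₁, y₂] hy ∧
      x₀ * y₀ = x₁ * y₁ ∧ x₁ * y₁ = x₂ * y₂}

/-- The `(−1)`-section `s = {(x,y) ∈ Z : x₀ = x₁ = 0}`. -/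
def sSection : Set (Projectivization ℂ (Fin 3 → ℂ) × Projectivization ℂ (Fin 3 → ℂ)) :=
  {P | P ∈ Z6C ∧ ∃ (x₂ y₀ y₁ y₂ : ℂ) (hx : (![0, 0, x₂] : Fin 3 → ℂ) ≠ 0)
      (hy : (![y₀, y₁, y₂] : Fin 3 → ℂ) ≠ 0),
      P.1 = Projectivization.mk ℂ ![0, 0, x₂] hx ∧
      P.2 = Projectivization.mk ℂ ![y₀, y₁, y₂] hy}

open Projectivization
open scoped LinearAlgebra.Projectivization

-- Makes the diagonal torus `ι → Kˣ` act on `ℙ K (ι → K)`.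
instance Pi.smulCommClass''' {ι M : Type*} {α β : ι → Type*} [∀ i, SMul M (β i)]
    [∀ i, SMul (α i) (β i)] [∀ i, SMulCommClass (α i) M (β i)] :
    SMulCommClass (∀ i, α i) M (∀ i, β i) :=
  ⟨fun x y z => funext fun i ↦ smul_comm (x i) y (z i)⟩

theorem Matrix.pi_smul_vec3 {M α : Type*} [SMul M α] (d : Fin 3 → M) (a b c : α) :
    d • ![a, b, c] = ![d 0 • a, d 1 • b, d 2 • c] := by
  ext i; fin_cases i <;> rfl

namespace Projectivization

variable {K ι : Type*} [Field K]

theorem pi_units_smul_mk_eq_self_iff (d : ι → Kˣ) {v : ι → K} (hv : v ≠ 0) :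
    d • mk K v hv = mk K v hv ↔ ∃ c : K, ∀ i, v i ≠ 0 → (d i : K) = c := by
  rw [smul_mk, mk_eq_mk_iff' K _ _ _ hv]
  simp only [funext_iff, Pi.smul_apply, Pi.smul_apply', Units.smul_def, smul_eq_mul]
  refine exists_congr fun c => forall_congr' fun i => ?_
  constructor
  · exact fun h hi => (mul_right_cancel₀ hi h).symm
  · intro h
    by_cases hi : v i = 0
    · simp [hi]
    · rw [h hi]

end Projectivization

theorem mk_mem_Z6C_iff {x₀ x₁ x₂ y₀ y₁ y₂ : ℂ} (hx : (![x₀, x₁, x₂] : Fin 3 → ℂ) ≠ 0)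
    (hy : (![y₀, y₁, y₂] : Fin 3 → ℂ) ≠ 0) :
    (mk ℂ ![x₀, x₁, x₂] hx, mk ℂ ![y₀, y₁, y₂] hy) ∈ Z6C ↔
      x₀ * y₀ = x₁ * y₁ ∧ x₁ * y₁ = x₂ * y₂ := by
  refine ⟨?_, fun h => ⟨_, _, _, _, _, _, hx, hy, rfl, rfl, h⟩⟩
  rintro ⟨x₀', x₁', x₂', y₀', y₁', y₂', hx', hy', hPx, hPy, h01, h12⟩
  obtain ⟨s, hs⟩ := (mk_eq_mk_iff' ℂ _ _ hx hx').1 hPx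
  obtain ⟨t, ht⟩ := (mk_eq_mk_iff' ℂ _ _ hy hy').1 hPy
  simp only [Matrix.smul_cons, Matrix.smul_empty, Matrix.vecCons_inj, smul_eq_mul] at hs ht
  obtain ⟨rfl, rfl, rfl, -⟩ := hs
  obtain ⟨rfl, rfl, rfl, -⟩ := ht
  constructor
  · linear_combination s * t * h01
  · linear_combination s * t * h12

theorem smul_mem_Z6C {dx dy : Fin 3 → ℂˣ} {c : ℂˣ} (h : ∀ i, dx i * dy i = c)
    {p q : ℙ ℂ (Fin 3 → ℂ)} (hP : (p, q) ∈ Z6C) : (dx • p, dy • q) ∈ Z6C := by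
  obtain ⟨x₀, x₁, x₂, y₀, y₁, y₂, hx, hy, rfl, rfl, h01, h12⟩ := hP
  have hc (i : Fin 3) : (dx i : ℂ) * dy i = c := by rw [← Units.val_mul, h]
  simp only [smul_mk, Matrix.pi_smul_vec3, Units.smul_def, smul_eq_mul, mk_mem_Z6C_iff]
  constructor
  · linear_combination c * h01 + x₀ * y₀ * hc 0 - x₁ * y₁ * hc 1
  · linear_combination c * h12 + x₁ * y₁ * hc 1 - x₂ * y₂ * hc 2

noncomputable def Z6C.diagPerm (dx dy : Fin 3 → ℂˣ) {c : ℂˣ} (h : ∀ i, dx i * dy i = c) :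
    Equiv.Perm Z6C :=
  (Equiv.prodCongr (MulAction.toPerm dx) (MulAction.toPerm dy)).subtypeEquiv fun _ =>
    ⟨fun hP => smul_mem_Z6C h hP, fun hP => by
      simpa using smul_mem_Z6C (dx := dx⁻¹) (dy := dy⁻¹) (c := c⁻¹)
        (fun i => by simp [← mul_inv, h]) hP⟩

theorem Z6C.diagPerm_apply (dx dy : Fin 3 → ℂˣ) {c : ℂˣ} (h : ∀ i, dx i * dy i = c)
    (P : Z6C) :
    (Z6C.diagPerm dx dy h P).val = (dx • P.val.1, dy • P.val.2) :=
  rfl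

theorem exists_eq_mk_of_mem_sSection {P : ℙ ℂ (Fin 3 → ℂ) × ℙ ℂ (Fin 3 → ℂ)}
    (hP : P ∈ sSection) :
    ∃ (x₂ y₀ y₁ : ℂ) (hx : (![0, 0, x₂] : Fin 3 → ℂ) ≠ 0) (hy : (![y₀, y₁, 0] : Fin 3 → ℂ) ≠ 0),
      P = (mk ℂ ![0, 0, x₂] hx, mk ℂ ![y₀, y₁, 0] hy) := by
  obtain ⟨hZ, x₂, y₀, y₁, y₂, hx, hy, hP₁, hP₂⟩ := hP
  obtain rfl : P = (_, _) := Prod.ext hP₁ hP₂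
  have hx₂ : x₂ ≠ 0 := fun h => hx (by simp [h])
  obtain rfl : y₂ = 0 := by
    have := ((mk_mem_Z6C_iff hx hy).1 hZ).2
    simpa [hx₂] using this.symm
  exact ⟨x₂, y₀, y₁, hx, hy, rfl⟩

def betaX (u : ℂˣ) : Fin 3 → ℂˣ := ![u * star u, 1, star u]

def betaY (u : ℂˣ) : Fin 3 → ℂˣ := ![1, u * star u, u]

theorem betaX_mul_betaY (u : ℂˣ) (i : Fin 3) : betaX u i * betaY u i = u * star u := by
  fin_cases i <;> simp [betaX, betaY, mul_comm]

noncomputable def Z6C.beta (u : ℂˣ) : Equiv.Perm Z6C :=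
  Z6C.diagPerm (betaX u) (betaY u) (betaX_mul_betaY u)

theorem beta_fixes_sSection_iff (u : ℂˣ) :
    (∀ P ∈ sSection, (betaX u • P.1, betaY u • P.2) = P) ↔ (u : ℂ) * starRingEnd ℂ u = 1 := by
  constructor
  · intro h
    have hx : (![0, 0, 1] : Fin 3 → ℂ) ≠ 0 := by simp
    have hy : (![1, 1, 0] : Fin 3 → ℂ) ≠ 0 := by simp
    have hs : (mk ℂ ![0, 0, 1] hx, mk ℂ ![1, 1, 0] hy) ∈ sSection :=
      ⟨(mk_mem_Z6C_iff hx hy).2 (by norm_num), 1, 1, 1, 0, hx, hy, rfl, rfl⟩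
    obtain ⟨c, hc⟩ := (pi_units_smul_mk_eq_self_iff _ hy).1 (congrArg Prod.snd (h _ hs))
    have h₀ := hc 0 (by simp)
    have h₁ := hc 1 (by simp)
    simp only [betaY] at h₀ h₁
    simpa [← h₀] using h₁
  · rintro h P hP
    obtain ⟨x₂, y₀, y₁, hx, hy, rfl⟩ := exists_eq_mk_of_mem_sSection hP
    refine Prod.ext ((pi_units_smul_mk_eq_self_iff _ hx).2 ⟨starRingEnd ℂ u, ?_⟩)
      ((pi_units_smul_mk_eq_self_iff _ hy).2 ⟨1, ?_⟩) <;>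
    · intro i hi
      fin_cases i <;> simp_all [betaX, betaY]

/-- For a nonzero complex number `a`, the map
`β_a(x,y) = ([a·conj(a)·x₀ : x₁ : conj(a)·x₂], [y₀ : a·conj(a)·y₁ : a·y₂])` is a
well-defined bijection of `Z`, and `β_a` fixes every point of the curve `s` if and only if
`a·conj(a) = 1`. -/
theorem stmt_10 (a : ℂ) (ha : a ≠ 0) :
    ∃ β : Equiv.Perm Z6C,
      (∀ (x₀ x₁ x₂ y₀ y₁ y₂ : ℂ) (hx : (![x₀, x₁, x₂] : Fin 3 → ℂ) ≠ 0)
          (hy : (![y₀, y₁, y₂] : Fin 3 → ℂ) ≠ 0)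
          (hx' : (![a * starRingEnd ℂ a * x₀, x₁, starRingEnd ℂ a * x₂] : Fin 3 → ℂ) ≠ 0)
          (hy' : (![y₀, a * starRingEnd ℂ a * y₁, a * y₂] : Fin 3 → ℂ) ≠ 0)
          (hmem : (Projectivization.mk ℂ ![x₀, x₁, x₂] hx,
              Projectivization.mk ℂ ![y₀, y₁, y₂] hy) ∈ Z6C),
        (β ⟨_, hmem⟩).val =
          (Projectivization.mk ℂ ![a * starRingEnd ℂ a * x₀, x₁, starRingEnd ℂ a * x₂] hx',
            Projectivization.mk ℂ ![y₀, a * starRingEnd ℂ a * y₁, a * y₂] hy')) ∧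
      ((∀ p : Z6C, p.val ∈ sSection → β p = p) ↔ a * starRingEnd ℂ a = 1) := by
  refine ⟨Z6C.beta (Units.mk0 a ha), fun _ _ _ _ _ _ _ _ _ _ _ => ?_,
    Iff.trans ?_ (beta_fixes_sSection_iff (Units.mk0 a ha))⟩
  · simp only [Z6C.beta, Z6C.diagPerm_apply, smul_mk]
    congr 2 <;> simp [Matrix.pi_smul_vec3, betaX, betaY, Units.smul_def]
  · exact ⟨fun h P hP => congrArg Subtype.val (h ⟨P, hP.1⟩ hP),
      fun h p hp => Subtype.ext (h p hp)⟩
end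

section
/- Let S = {[w:x:y:z] ∈ ℙ³(ℂ) : wz = x²+y²} and Z₂ = {([w:x:y:z],[u:v]) ∈ ℙ³(ℂ)×ℙ¹(ℂ) : wz = x²+y², uz = vw}, and let p: Z₂ → S be the projection onto the first factor. Then p is surjective; for every point q ∈ S other than the two points q₊ = [0:1:i:0] and q₋ = [0:1:−i:0], the fibre p⁻¹(q) consists of a single point (namely the one with [u:v] = [w:z]); and each of the two fibres p⁻¹(q₊) and p⁻¹(q₋) is in bijection with ℙ¹(ℂ). -/
/-- The complex quadric surface `S = {[w:x:y:z] ∈ ℙ³(ℂ) : wz = x² + y²}`. -/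
def Ssurf : Set (Projectivization ℂ (Fin 4 → ℂ)) :=
  {p | ∃ (w x y z : ℂ) (h : (![w, x, y, z] : Fin 4 → ℂ) ≠ 0),
      p = Projectivization.mk ℂ ![w, x, y, z] h ∧ w * z = x ^ 2 + y ^ 2}

/-- The surface `Z₂ = {([w:x:y:z],[u:v]) ∈ ℙ³(ℂ) × ℙ¹(ℂ) : wz = x² + y², uz = vw}`. -/
def Z2C : Set (Projectivization ℂ (Fin 4 → ℂ) × Projectivization ℂ (Fin 2 → ℂ)) :=
  {P | ∃ (w x y z u v : ℂ) (h1 : (![w, x, y, z] : Fin 4 → ℂ) ≠ 0)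
      (h2 : (![u, v] : Fin 2 → ℂ) ≠ 0),
      P = (Projectivization.mk ℂ ![w, x, y, z] h1, Projectivization.mk ℂ ![u, v] h2) ∧
      w * z = x ^ 2 + y ^ 2 ∧ u * z = v * w}

/-- The point `q₊ = [0:1:i:0]`. -/
noncomputable def qPlus : Projectivization ℂ (Fin 4 → ℂ) :=
  Projectivization.mk ℂ ![0, 1, Complex.I, 0]
    (by intro h; simpa using congrFun h 1)

/-- The point `q₋ = [0:1:−i:0]`. -/
noncomputable def qMinus : Projectivization ℂ (Fin 4 → ℂ) :=
  Projectivization.mk ℂ ![0, 1, -Complex.I, 0]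
    (by intro h; simpa using congrFun h 1)


/-! Both defining equations are homogeneous, so membership in `S` and `Z₂` can be read off any
pair of representatives. Where `(w, z) ≠ 0`, the relation `uz = vw` says `(u, v)` is
proportional to `(w, z)`, which pins `[u:v] = [w:z]`. The only points of `S` with `w = z = 0`
satisfy `x² + y² = (y - ix)(y + ix) = 0`, i.e. they are `q₊` and `q₋`, and there the relation
`uz = vw` is vacuous. -/

open Projectivization
open scoped LinearAlgebra.Projectivization

lemma mk_mem_Ssurf_iff (v : Fin 4 → ℂ) (hv : v ≠ 0) :
    mk ℂ v hv ∈ Ssurf ↔ v 0 * v 3 = v 1 ^ 2 + v 2 ^ 2 := by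
  constructor
  · rintro ⟨w, x, y, z, h, hq, hrel⟩
    obtain ⟨a, rfl⟩ := (mk_eq_mk_iff ℂ _ _ hv h).1 hq
    simp only [Units.smul_def, Pi.smul_apply, Matrix.cons_val, smul_eq_mul]
    linear_combination (a : ℂ) ^ 2 * hrel
  · intro hrel
    exact ⟨v 0, v 1, v 2, v 3, (FinVec.etaExpand_eq v).symm ▸ hv,
      by congr; exact (FinVec.etaExpand_eq v).symm, hrel⟩

lemma mk_mem_Z2C_iff (v : Fin 4 → ℂ) (hv : v ≠ 0) (s : Fin 2 → ℂ) (hs : s ≠ 0) :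
    (mk ℂ v hv, mk ℂ s hs) ∈ Z2C ↔
      v 0 * v 3 = v 1 ^ 2 + v 2 ^ 2 ∧ s 0 * v 3 = s 1 * v 0 := by
  constructor
  · rintro ⟨w, x, y, z, u, t, h1, h2, hP, hrel, hut⟩
    obtain ⟨a, rfl⟩ := (mk_eq_mk_iff ℂ _ _ hv h1).1 (congrArg Prod.fst hP)
    obtain ⟨b, rfl⟩ := (mk_eq_mk_iff ℂ _ _ hs h2).1 (congrArg Prod.snd hP)
    simp only [Units.smul_def, Pi.smul_apply, Matrix.cons_val, smul_eq_mul]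
    exact ⟨by linear_combination (a : ℂ) ^ 2 * hrel,
      by linear_combination (a * b : ℂ) * hut⟩
  · rintro ⟨hrel, hcross⟩
    exact ⟨v 0, v 1, v 2, v 3, s 0, s 1, (FinVec.etaExpand_eq v).symm ▸ hv,
      (FinVec.etaExpand_eq s).symm ▸ hs,
      by congr <;> exact (FinVec.etaExpand_eq _).symm, hrel, hcross⟩

lemma mk_eq_mk_of_mul_eq_mul {K : Type*} [Field K] {s t : Fin 2 → K} (hs : s ≠ 0) (ht : t ≠ 0)
    (h : s 0 * t 1 = s 1 * t 0) : mk K s hs = mk K t ht := by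
  rw [mk_eq_mk_iff']
  by_cases ht0 : t 0 = 0
  · have ht1 : t 1 ≠ 0 := fun ht1 => ht (funext (Fin.forall_fin_two.2 ⟨ht0, ht1⟩))
    have hs0 : s 0 = 0 := by simpa [ht0, ht1] using h
    exact ⟨s 1 / t 1, funext (Fin.forall_fin_two.2 ⟨by simp [ht0, hs0], by simp [ht1]⟩)⟩
  · refine ⟨s 0 / t 0, funext (Fin.forall_fin_two.2 ⟨by simp [ht0], ?_⟩)⟩
    simp only [Pi.smul_apply, smul_eq_mul]
    field_simp
    linear_combination h

lemma mk_eq_qPlus_or_qMinus {v : Fin 4 → ℂ} (hv : v ≠ 0) (hw : v 0 = 0) (hz : v 3 = 0)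
    (hxy : v 1 ^ 2 + v 2 ^ 2 = 0) : mk ℂ v hv = qPlus ∨ mk ℂ v hv = qMinus := by
  have hx : v 1 ≠ 0 := by
    intro hx
    have hy : v 2 = 0 := pow_eq_zero_iff two_ne_zero |>.1 (by simpa [hx] using hxy)
    exact hv (funext fun i => by fin_cases i <;> assumption)
  have hfac : (v 2 - Complex.I * v 1) * (v 2 + Complex.I * v 1) = 0 := by
    linear_combination hxy - v 1 ^ 2 * Complex.I_sq
  unfold qPlus qMinus
  simp only [mk_eq_mk_iff']
  rcases mul_eq_zero.1 hfac with hy | hy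
  · left
    have hy : v 2 = Complex.I * v 1 := by linear_combination hy
    exact ⟨v 1, funext fun i => by fin_cases i <;> simp [hw, hz, hy, mul_comm]⟩
  · right
    have hy : v 2 = -Complex.I * v 1 := by linear_combination hy
    exact ⟨v 1, funext fun i => by fin_cases i <;> simp [hw, hz, hy, mul_comm]⟩

lemma qPlus_mem_Z2C (r : ℙ ℂ (Fin 2 → ℂ)) : (qPlus, r) ∈ Z2C := by
  induction r using Projectivization.ind with
  | h s hs => simp [qPlus, mk_mem_Z2C_iff]

lemma qMinus_mem_Z2C (r : ℙ ℂ (Fin 2 → ℂ)) : (qMinus, r) ∈ Z2C := by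
  induction r using Projectivization.ind with
  | h s hs => simp [qMinus, mk_mem_Z2C_iff]

lemma wz_ne_zero_of_mk_mem_Ssurf {v : Fin 4 → ℂ} (hv : v ≠ 0) (hS : mk ℂ v hv ∈ Ssurf)
    (hp : mk ℂ v hv ≠ qPlus) (hm : mk ℂ v hv ≠ qMinus) :
    (![v 0, v 3] : Fin 2 → ℂ) ≠ 0 := by
  intro hwz
  have hw : v 0 = 0 := congrFun hwz 0
  have hz : v 3 = 0 := congrFun hwz 1
  rw [mk_mem_Ssurf_iff, hw, zero_mul, eq_comm] at hS
  rcases mk_eq_qPlus_or_qMinus hv hw hz hS with h | h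
  exacts [hp h, hm h]

lemma mk_mem_Z2C_iff_eq_mk {v : Fin 4 → ℂ} (hv : v ≠ 0) (hS : mk ℂ v hv ∈ Ssurf)
    (hwz : (![v 0, v 3] : Fin 2 → ℂ) ≠ 0) (r : ℙ ℂ (Fin 2 → ℂ)) :
    (mk ℂ v hv, r) ∈ Z2C ↔ r = mk ℂ ![v 0, v 3] hwz := by
  induction r using Projectivization.ind with | h s hs => ?_
  rw [mk_mem_Z2C_iff, ← mk_mem_Ssurf_iff v hv, and_iff_right hS]
  constructor
  · exact mk_eq_mk_of_mul_eq_mul hs hwz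
  · intro h
    obtain ⟨a, rfl⟩ := (mk_eq_mk_iff' ℂ _ _ hs hwz).1 h
    simp only [Pi.smul_apply, Matrix.cons_val, smul_eq_mul]
    ring

/-- The projection `p : Z₂ → S` onto the first factor is surjective; over every point of `S`
other than `q₊` and `q₋` the fibre is a single point, namely the one with `[u:v] = [w:z]`;
and the fibres over `q₊` and `q₋` are each in bijection with `ℙ¹(ℂ)`. -/
theorem stmt_12 :
    (∀ P ∈ Z2C, P.1 ∈ Ssurf) ∧
    (∀ q ∈ Ssurf, ∃ r, (q, r) ∈ Z2C) ∧
    (∀ q ∈ Ssurf, q ≠ qPlus → q ≠ qMinus →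
      (∃! r : Projectivization ℂ (Fin 2 → ℂ), (q, r) ∈ Z2C) ∧
      ∀ (w x y z : ℂ) (h : (![w, x, y, z] : Fin 4 → ℂ) ≠ 0)
        (hwz : (![w, z] : Fin 2 → ℂ) ≠ 0),
        q = Projectivization.mk ℂ ![w, x, y, z] h →
        (q, Projectivization.mk ℂ ![w, z] hwz) ∈ Z2C) ∧
    Nonempty ({r : Projectivization ℂ (Fin 2 → ℂ) | (qPlus, r) ∈ Z2C} ≃
      Projectivization ℂ (Fin 2 → ℂ)) ∧
    Nonempty ({r : Projectivization ℂ (Fin 2 → ℂ) | (qMinus, r) ∈ Z2C} ≃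
      Projectivization ℂ (Fin 2 → ℂ)) := by
  refine ⟨fun P ⟨w, x, y, z, _, _, h, _, hP, hS, _⟩ =>
      ⟨w, x, y, z, h, congrArg Prod.fst hP, hS⟩,
    fun q hq => ?_, fun q hq hp hm => ?_, ⟨Equiv.subtypeUnivEquiv qPlus_mem_Z2C⟩,
    ⟨Equiv.subtypeUnivEquiv qMinus_mem_Z2C⟩⟩
  · by_cases hp : q = qPlus
    · exact ⟨Classical.arbitrary _, hp ▸ qPlus_mem_Z2C _⟩
    by_cases hm : q = qMinus
    · exact ⟨Classical.arbitrary _, hm ▸ qMinus_mem_Z2C _⟩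
    induction q using Projectivization.ind with | h v hv => ?_
    exact ⟨_, (mk_mem_Z2C_iff_eq_mk hv hq (wz_ne_zero_of_mk_mem_Ssurf hv hq hp hm) _).2 rfl⟩
  · induction q using Projectivization.ind with | h v hv => ?_
    have hwz := wz_ne_zero_of_mk_mem_Ssurf hv hq hp hm
    refine ⟨⟨_, (mk_mem_Z2C_iff_eq_mk hv hq hwz _).2 rfl,
      fun r => (mk_mem_Z2C_iff_eq_mk hv hq hwz r).1⟩, fun w x y z h hwz' hq' => ?_⟩
    rw [hq'] at hq ⊢
    exact (mk_mem_Z2C_iff_eq_mk h hq hwz' _).2 rfl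
end
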